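/- arXiv:0902.3422 — 6 statements merged into one kernel-verified Lean document; each statement's English description precedes it below -/
import Mathlib

section
/- Let {e_n} be a semi-normalized strongly summing basic sequence in a Banach space with difference sequence {v_n} (v_1 = e_1, v_n = e_n - e_{n-1} for n > 1). If {v_n} is supershrinking, then {e_n} is boundedly complete. -/
open Filter Finset NormedSpace

noncomputable section

variable {X : Type*} [NormedAddCommGroup X] [NormedSpace ℝ X]

/-- Partial sums `∑_{i<n} a i • e i`. -/
def PartialSum (e : ℕ → X) (a : ℕ → ℝ) (n : ℕ) : X :=
  ∑ i ∈ Finset.range n, a i • e i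

/-- A (Schauder) basic sequence, via the basis-constant inequality. -/
def IsBasicSeq (e : ℕ → X) : Prop :=
  (∀ n, e n ≠ 0) ∧ ∃ K : ℝ, 1 ≤ K ∧ ∀ (a : ℕ → ℝ) (m n : ℕ), m ≤ n →
    ‖PartialSum e a m‖ ≤ K * ‖PartialSum e a n‖

def SemiNormalized (e : ℕ → X) : Prop :=
  ∃ c C : ℝ, 0 < c ∧ ∀ n, c ≤ ‖e n‖ ∧ ‖e n‖ ≤ C

def BoundedPartialSums (e : ℕ → X) (a : ℕ → ℝ) : Prop :=
  ∃ M : ℝ, ∀ n, ‖PartialSum e a n‖ ≤ M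

def SeriesConverges (e : ℕ → X) (a : ℕ → ℝ) : Prop :=
  ∃ x : X, Filter.Tendsto (PartialSum e a) Filter.atTop (nhds x)

def BoundedlyComplete (e : ℕ → X) : Prop :=
  ∀ a : ℕ → ℝ, BoundedPartialSums e a → SeriesConverges e a

def WeaklyCauchy (e : ℕ → X) : Prop :=
  ∀ f : X →L[ℝ] ℝ, ∃ l : ℝ, Filter.Tendsto (fun n => f (e n)) Filter.atTop (nhds l)

def WeaklyConvergesTo (x : ℕ → X) (l : X) : Prop :=
  ∀ f : X →L[ℝ] ℝ, Filter.Tendsto (fun n => f (x n)) Filter.atTop (nhds (f l))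

def StronglySumming (e : ℕ → X) : Prop :=
  WeaklyCauchy e ∧ ∀ a : ℕ → ℝ, BoundedPartialSums e a →
    ∃ s : ℝ, Filter.Tendsto (fun n => ∑ i ∈ Finset.range n, a i) Filter.atTop (nhds s)

/-- Closed linear span of the tail `{e k : k ≥ n}`. -/
def tailSpan (e : ℕ → X) (n : ℕ) : Submodule ℝ X :=
  (Submodule.span ℝ {x | ∃ k, n ≤ k ∧ x = e k}).topologicalClosure

/-- Shrinking: the norms of a functional restricted to the tail spans tend to `0`. -/
def Shrinking (e : ℕ → X) : Prop :=
  ∀ f : X →L[ℝ] ℝ, ∀ ε > 0, ∃ N, ∀ n ≥ N, ∀ x ∈ tailSpan e n, ‖x‖ ≤ 1 → |f x| ≤ ε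

def Supershrinking (e : ℕ → X) : Prop :=
  Shrinking e ∧ ∀ a : ℕ → ℝ, Filter.Tendsto a Filter.atTop (nhds 0) →
    BoundedPartialSums e a → SeriesConverges e a

/-- Difference sequence: `v 0 = e 0`, `v n = e n - e (n-1)`. -/
def diffSeq (e : ℕ → X) : ℕ → X :=
  fun n => if n = 0 then e 0 else e n - e (n - 1)

def closedSpan (e : ℕ → X) : Submodule ℝ X :=
  (Submodule.span ℝ (Set.range e)).topologicalClosure

/-- A Banach space is reflexive iff the canonical embedding into the bidual is onto. -/
def BanachReflexive (Y : Type*) [NormedAddCommGroup Y] [NormedSpace ℝ Y] : Prop :=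
  Function.Surjective (NormedSpace.inclusionInDoubleDual ℝ Y)

/-- Order one quasireflexive: the canonical image of `Y` in `Y**` has codimension 1. -/
def OrderOneQuasireflexive (Y : Type*) [NormedAddCommGroup Y] [NormedSpace ℝ Y] : Prop :=
  Module.finrank ℝ ((StrongDual ℝ (StrongDual ℝ Y)) ⧸
    LinearMap.range (NormedSpace.inclusionInDoubleDual ℝ Y).toLinearMap) = 1

/-- A Schauder basis of `X` with coordinate functionals `f`. -/
def IsSchauderBasis (e : ℕ → X) (f : ℕ → X →L[ℝ] ℝ) : Prop :=
  (∀ n m, f n (e m) = if n = m then 1 else 0) ∧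
  ∀ x : X, Filter.Tendsto (fun n => ∑ i ∈ Finset.range n, f i x • e i)
    Filter.atTop (nhds x)

/-- `X` contains a sequence equivalent to the unit vector basis of `c₀`
(equivalently, a subspace isomorphic to `c₀`). -/
def ContainsC0 (X : Type*) [NormedAddCommGroup X] [NormedSpace ℝ X] : Prop :=
  ∃ (x : ℕ → X) (c C : ℝ), 0 < c ∧ ∀ (a : ℕ → ℝ) (n : ℕ),
    c * ((Finset.range (n+1)).sup' Finset.nonempty_range_add_one fun i => |a i|) ≤
        ‖∑ i ∈ Finset.range (n+1), a i • x i‖ ∧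
      ‖∑ i ∈ Finset.range (n+1), a i • x i‖ ≤
        C * ((Finset.range (n+1)).sup' Finset.nonempty_range_add_one fun i => |a i|)

/-- Equivalence of sequences: same convergent coefficient series. -/
def EquivSeq (e v : ℕ → X) : Prop :=
  ∀ a : ℕ → ℝ, SeriesConverges e a ↔ SeriesConverges v a



/-!
Given `a` with bounded partial sums along `e`, strong summability makes `S n = ∑_{i<n} a i`
converge to some `s`, so the tails `b n = s - S n` tend to `0` and `b n - b (n+1) = a n`.
Abel summation turns `∑_{i≤n} b i • v i` into `∑_{i≤n} a i • e i + b (n+1) • e n`, and the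
last term tends to `0` because `e` is bounded. Hence `∑ b i • v i` has bounded partial sums
and null coefficients, so it converges since `v` is supershrinking, and then so does
`∑ a i • e i`.
-/

theorem partialSum_diffSeq_succ (e : ℕ → X) (b : ℕ → ℝ) (n : ℕ) :
    PartialSum (diffSeq e) b (n + 1) =
      PartialSum e (fun i => b i - b (i + 1)) (n + 1) + b (n + 1) • e n := by
  induction n with
  | zero => simp [PartialSum, diffSeq, sub_smul]
  | succ n ih =>
    simp only [PartialSum] at ih ⊢
    rw [Finset.sum_range_succ, ih, Finset.sum_range_succ _ (n + 1)]
    simp only [diffSeq, Nat.succ_ne_zero, if_false, Nat.add_sub_cancel, smul_sub, sub_smul]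
    abel

theorem BoundedPartialSums.diffSeq {e : ℕ → X} {b : ℕ → ℝ} {B C : ℝ}
    (hb : ∀ n, ‖b n‖ ≤ B) (he : ∀ n, ‖e n‖ ≤ C)
    (h : BoundedPartialSums e (fun i => b i - b (i + 1))) :
    BoundedPartialSums (diffSeq e) b := by
  obtain ⟨M, hM⟩ := h
  have hM₀ : 0 ≤ M := (norm_nonneg _).trans (hM 0)
  have hBC : 0 ≤ B * C :=
    mul_nonneg ((norm_nonneg _).trans (hb 0)) ((norm_nonneg _).trans (he 0))
  refine ⟨M + B * C, fun n => ?_⟩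
  cases n with
  | zero => simpa [PartialSum] using add_nonneg hM₀ hBC
  | succ n =>
    rw [partialSum_diffSeq_succ]
    calc _ ≤ ‖PartialSum e (fun i => b i - b (i + 1)) (n + 1)‖ + ‖b (n + 1)‖ * ‖e n‖ :=
          (norm_add_le _ _).trans_eq (by rw [norm_smul])
      _ ≤ M + B * C := add_le_add (hM _) (mul_le_mul (hb _) (he n) (norm_nonneg _)
          ((norm_nonneg _).trans (hb 0)))

theorem SeriesConverges.of_diffSeq {e : ℕ → X} {b : ℕ → ℝ} {C : ℝ}
    (hb : Tendsto b atTop (nhds 0)) (he : ∀ n, ‖e n‖ ≤ C)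
    (h : SeriesConverges (diffSeq e) b) :
    SeriesConverges e (fun i => b i - b (i + 1)) := by
  obtain ⟨x, hx⟩ := h
  have hcorr : Tendsto (fun n => b (n + 1) • e n) atTop (nhds 0) :=
    (hb.comp (tendsto_add_atTop_nat 1)).zero_smul_isBoundedUnder_le
      (isBoundedUnder_of ⟨C, he⟩)
  refine ⟨x, (tendsto_add_atTop_iff_nat 1).mp ?_⟩
  simpa [partialSum_diffSeq_succ] using (hx.comp (tendsto_add_atTop_nat 1)).sub hcorr

theorem stmt0_general {X : Type*} [NormedAddCommGroup X] [NormedSpace ℝ X]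
    (e : ℕ → X) (hsn : SemiNormalized e)
    (hss : StronglySumming e) (hsup : Supershrinking (diffSeq e)) :
    BoundedlyComplete e := by
  obtain ⟨_, C, _, he⟩ := hsn
  replace he : ∀ n, ‖e n‖ ≤ C := fun n => (he n).2
  intro a ha
  obtain ⟨s, hs⟩ := hss.2 a ha
  set b : ℕ → ℝ := fun n => s - ∑ i ∈ Finset.range n, a i
  have hab : (fun i => b i - b (i + 1)) = a := by
    funext i
    simp [b, Finset.sum_range_succ]
  have hb₀ : Tendsto b atTop (nhds 0) := by simpa using hs.const_sub s
  obtain ⟨B, hB⟩ := hb₀.cauchySeq.isBounded_range.exists_norm_le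
  have hbdd : BoundedPartialSums (diffSeq e) b :=
    .diffSeq (fun n => hB _ ⟨n, rfl⟩) he (hab ▸ ha)
  simpa [hab] using (hsup.2 b hb₀ hbdd).of_diffSeq hb₀ he

/-- A semi-normalized strongly summing basic sequence whose
difference sequence is supershrinking is boundedly complete. -/
theorem stmt0 {X : Type*} [NormedAddCommGroup X] [NormedSpace ℝ X] [CompleteSpace X]
    (e : ℕ → X) (hb : IsBasicSeq e) (hsn : SemiNormalized e)
    (hss : StronglySumming e) (hsup : Supershrinking (diffSeq e)) :
    BoundedlyComplete e :=
  stmt0_general e hsn hss hsup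

end
end

section
/- Let X be a Banach space with a semi-normalized supershrinking basis {e_n}. If v_n = ∑_{k=σ(n-1)+1}^{σ(n)} λ_k e_k is a block basic sequence of {e_n} with {λ_n} a bounded scalar sequence (and {v_n} semi-normalized basic), then {v_n} is a supershrinking basic sequence. -/
open Filter Finset NormedSpace

noncomputable section

variable {X : Type*} [NormedAddCommGroup X] [NormedSpace ℝ X]

/-! A block sequence of a basis inherits shrinking because its tail spans sit inside those of
the basis. For the second half, a coefficient sequence `a` of the blocks is rewritten as the
coefficient sequence `b k = a n * lam k` (for `k` in the `n`-th block) of the basis: `b` tends to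
`0` with `a`, the partial sums of `∑ a n v n` are the partial sums of `∑ b k e k` at the block
ends, and the uniform bound on the basis projections bounds all partial sums of `∑ b k e k` by
the block-end ones. Supershrinking of the basis then makes `∑ b k e k`, hence `∑ a n v n`,
converge. -/

def basisProj (e : ℕ → X) (f : ℕ → X →L[ℝ] ℝ) (m : ℕ) : X →L[ℝ] X :=
  ∑ i ∈ range m, (f i).smulRight (e i)

theorem basisProj_apply (e : ℕ → X) (f : ℕ → X →L[ℝ] ℝ) (m : ℕ) (x : X) :
    basisProj e f m x = ∑ i ∈ range m, f i x • e i := by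
  simp [basisProj]

theorem basisProj_partialSum {e : ℕ → X} {f : ℕ → X →L[ℝ] ℝ}
    (hbio : ∀ n m, f n (e m) = if n = m then 1 else 0) (b : ℕ → ℝ) {m N : ℕ} (hmN : m ≤ N) :
    basisProj e f m (PartialSum e b N) = PartialSum e b m := by
  have hcoord : ∀ i, f i (PartialSum e b N) = if i < N then b i else 0 := by
    intro i
    simp [PartialSum, map_sum, hbio, Finset.sum_ite_eq]
  rw [basisProj_apply]
  refine Finset.sum_congr rfl fun i hi => ?_
  rw [hcoord, if_pos (lt_of_lt_of_le (Finset.mem_range.mp hi) hmN)]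

theorem IsSchauderBasis.exists_norm_basisProj_le [CompleteSpace X] {e : ℕ → X}
    {f : ℕ → X →L[ℝ] ℝ} (hb : IsSchauderBasis e f) : ∃ K, ∀ m, ‖basisProj e f m‖ ≤ K :=
  banach_steinhaus fun x => by
    obtain ⟨K, hK⟩ := ((hb.2 x).norm).bddAbove_range
    exact ⟨K, fun m => by simpa only [basisProj_apply] using hK ⟨m, rfl⟩⟩

theorem IsSchauderBasis.exists_norm_partialSum_le [CompleteSpace X] {e : ℕ → X}
    {f : ℕ → X →L[ℝ] ℝ} (hb : IsSchauderBasis e f) :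
    ∃ K, 0 ≤ K ∧ ∀ (b : ℕ → ℝ) (m N : ℕ), m ≤ N →
      ‖PartialSum e b m‖ ≤ K * ‖PartialSum e b N‖ := by
  obtain ⟨K, hK⟩ := hb.exists_norm_basisProj_le
  refine ⟨K, (norm_nonneg _).trans (hK 0), fun b m N hmN => ?_⟩
  rw [← basisProj_partialSum hb.1 b hmN]
  exact (basisProj e f m).le_of_opNorm_le (hK m) _

/-- For `σ` strictly monotone, the `n` with `k ∈ Ioc (σ n) (σ (n + 1))`. -/
def blockIndex (σ : ℕ → ℕ) (k : ℕ) : ℕ :=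
  Nat.findGreatest (fun n => σ n < k) k

theorem blockIndex_eq {σ : ℕ → ℕ} (hσ : StrictMono σ) {n k : ℕ}
    (hk : k ∈ Ioc (σ n) (σ (n + 1))) : blockIndex σ k = n := by
  rw [Finset.mem_Ioc] at hk
  refine Nat.findGreatest_eq_iff.mpr ⟨(hσ.le_apply).trans hk.1.le, fun _ => hk.1, ?_⟩
  intro m hnm _ hm
  exact absurd hk.2 (not_le.mpr ((hσ.monotone hnm).trans_lt hm))

theorem tendsto_blockIndex {σ : ℕ → ℕ} (hσ : StrictMono σ) :
    Tendsto (blockIndex σ) atTop atTop :=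
  tendsto_atTop_atTop.mpr fun N => ⟨σ N + 1, fun _ hk =>
    Nat.le_findGreatest ((hσ.le_apply).trans (Nat.le_of_succ_le hk)) hk⟩

def blockCoeff (σ : ℕ → ℕ) (a lam : ℕ → ℝ) (k : ℕ) : ℝ :=
  if σ 0 < k then a (blockIndex σ k) * lam k else 0

theorem blockCoeff_of_mem {σ : ℕ → ℕ} (hσ : StrictMono σ) (a lam : ℕ → ℝ) {n k : ℕ}
    (hk : k ∈ Ioc (σ n) (σ (n + 1))) : blockCoeff σ a lam k = a n * lam k := by
  have h0 : σ 0 < k := (hσ.monotone n.zero_le).trans_lt (Finset.mem_Ioc.mp hk).1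
  rw [blockCoeff, if_pos h0, blockIndex_eq hσ hk]

theorem partialSum_blockCoeff {σ : ℕ → ℕ} (hσ : StrictMono σ) {e v : ℕ → X} {lam : ℕ → ℝ}
    (hv : ∀ n, v n = ∑ k ∈ Ioc (σ n) (σ (n + 1)), lam k • e k) (a : ℕ → ℝ) (n : ℕ) :
    PartialSum e (blockCoeff σ a lam) (σ n + 1) = PartialSum v a n := by
  induction n with
  | zero =>
    refine Finset.sum_eq_zero fun k hk => ?_
    rw [blockCoeff, if_neg (by simpa [Nat.lt_succ_iff] using hk), zero_smul]
  | succ n ih =>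
    have hle : σ n + 1 ≤ σ (n + 1) + 1 := Nat.succ_le_succ (hσ n.lt_succ_self).le
    rw [PartialSum, ← Finset.sum_range_add_sum_Ico _ hle, ← PartialSum, ih,
      Finset.Ico_add_one_add_one_eq_Ioc, PartialSum, PartialSum, Finset.sum_range_succ, hv n,
      Finset.smul_sum]
    congr 1
    refine Finset.sum_congr rfl fun k hk => ?_
    rw [blockCoeff_of_mem hσ a lam hk, mul_smul]

theorem tendsto_blockCoeff_zero {σ : ℕ → ℕ} (hσ : StrictMono σ) {a lam : ℕ → ℝ} {C : ℝ}
    (ha : Tendsto a atTop (nhds 0)) (hC : ∀ k, |lam k| ≤ C) :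
    Tendsto (blockCoeff σ a lam) atTop (nhds 0) := by
  have hdom : Tendsto (fun k => |a (blockIndex σ k)| * C) atTop (nhds 0) := by
    simpa using ((ha.comp (tendsto_blockIndex hσ)).abs).mul_const C
  refine squeeze_zero_norm (fun k => ?_) hdom
  rw [Real.norm_eq_abs, blockCoeff]
  split_ifs
  · rw [abs_mul]
    exact mul_le_mul_of_nonneg_left (hC k) (abs_nonneg _)
  · simpa using mul_nonneg (abs_nonneg _) ((abs_nonneg _).trans (hC 0))

theorem tailSpan_block_le {σ : ℕ → ℕ} (hσ : StrictMono σ) {e v : ℕ → X} {lam : ℕ → ℝ}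
    (hv : ∀ n, v n = ∑ k ∈ Ioc (σ n) (σ (n + 1)), lam k • e k) (n : ℕ) :
    tailSpan v n ≤ tailSpan e (σ n + 1) := by
  refine Submodule.topologicalClosure_minimal _ ?_ (Submodule.isClosed_topologicalClosure _)
  rw [Submodule.span_le]
  rintro _ ⟨m, hnm, rfl⟩
  rw [hv m]
  refine Submodule.sum_mem _ fun k hk => Submodule.smul_mem _ _ ?_
  refine Submodule.le_topologicalClosure _ (Submodule.subset_span ⟨k, ?_, rfl⟩)
  exact Nat.succ_le_of_lt ((hσ.monotone hnm).trans_lt (Finset.mem_Ioc.mp hk).1)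

theorem Shrinking.of_tailSpan_le {e v : ℕ → X} (he : Shrinking e) {τ : ℕ → ℕ}
    (hτ : Tendsto τ atTop atTop) (hve : ∀ n, tailSpan v n ≤ tailSpan e (τ n)) : Shrinking v := by
  intro g ε hε
  obtain ⟨N, hN⟩ := he g ε hε
  obtain ⟨M, hM⟩ := tendsto_atTop_atTop.mp hτ N
  exact ⟨M, fun n hn x hx hx1 => hN (τ n) (hM n hn) x (hve n hx) hx1⟩

theorem stmt3_general {X : Type*} [NormedAddCommGroup X] [NormedSpace ℝ X] [CompleteSpace X]
    (e : ℕ → X) (f : ℕ → X →L[ℝ] ℝ) (hbasis : IsSchauderBasis e f)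
    (hsup : Supershrinking e)
    (σ : ℕ → ℕ) (hσ : StrictMono σ) (lam : ℕ → ℝ) (C : ℝ) (hC : ∀ k, |lam k| ≤ C)
    (v : ℕ → X) (hv : ∀ n, v n = ∑ k ∈ Finset.Ioc (σ n) (σ (n+1)), lam k • e k) :
    Supershrinking v := by
  have hblockEnd : Tendsto (fun n => σ n + 1) atTop atTop :=
    tendsto_atTop_mono (fun n => Nat.le_succ _) hσ.tendsto_atTop
  refine ⟨hsup.1.of_tailSpan_le hblockEnd (tailSpan_block_le hσ hv), fun a ha ⟨M, hM⟩ => ?_⟩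
  obtain ⟨K, hK0, hK⟩ := hbasis.exists_norm_partialSum_le
  have hsum := partialSum_blockCoeff hσ hv a
  have hbdd : BoundedPartialSums e (blockCoeff σ a lam) := ⟨K * M, fun m => calc
    ‖PartialSum e (blockCoeff σ a lam) m‖
        ≤ K * ‖PartialSum e (blockCoeff σ a lam) (σ m + 1)‖ :=
          hK _ _ _ ((hσ.le_apply).trans (Nat.le_succ _))
    _ = K * ‖PartialSum v a m‖ := by rw [hsum]
    _ ≤ K * M := mul_le_mul_of_nonneg_left (hM m) hK0⟩
  obtain ⟨x, hx⟩ := hsup.2 _ (tendsto_blockCoeff_zero hσ ha hC) hbdd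
  exact ⟨x, by simpa only [Function.comp_def, hsum] using hx.comp hblockEnd⟩

/-- a semi-normalized basic block sequence, with bounded
coefficients, of a semi-normalized supershrinking basis is supershrinking. -/
theorem stmt3 {X : Type*} [NormedAddCommGroup X] [NormedSpace ℝ X] [CompleteSpace X]
    (e : ℕ → X) (f : ℕ → X →L[ℝ] ℝ) (hbasis : IsSchauderBasis e f)
    (hsn : SemiNormalized e) (hsup : Supershrinking e)
    (σ : ℕ → ℕ) (hσ : StrictMono σ) (lam : ℕ → ℝ) (C : ℝ) (hC : ∀ k, |lam k| ≤ C)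
    (v : ℕ → X) (hv : ∀ n, v n = ∑ k ∈ Finset.Ioc (σ n) (σ (n+1)), lam k • e k)
    (hvb : IsBasicSeq v) (hvsn : SemiNormalized v) :
    Supershrinking v :=
  stmt3_general e f hbasis hsup σ hσ lam C hC v hv

end
end

section
/- Let X be a Banach space such that every semi-normalized basic sequence in X has a subsequence whose closed linear span is reflexive. Then X is reflexive. -/
open Filter Finset NormedSpace

noncomputable section

variable {X : Type*} [NormedAddCommGroup X] [NormedSpace ℝ X]

/-! Suppose `X` is not reflexive and pick `F ∈ X** \ X`, at distance `d > 0` from `X`. By Helly's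
theorem, finitely many values of `F` are attained by a vector of `X` of norm at most `‖F‖ + 1`.
This lets one choose recursively vectors `x n` and uniformly bounded functionals `f k` with
`f k (x n) = 1` for `k ≤ n` and `f k (x n) = 0` for `n < k`: the functional `f k` has `F (f k) = 1`
and kills `x 0, …, x (k-1)`, while `x n` agrees with `F` on every functional chosen so far. Among
those functionals are finitely many elements of `ker F` norming the span of the earlier terms,
which `x n` therefore annihilates; by Mazur's argument `(x n)` is a basic sequence, and it is
semi-normalized. For a subsequence spanning a reflexive space, a weak cluster point `w` would
satisfy `f k w = 1` for all `k`, whereas the `f k` are eventually `0` on each vector of the span,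
hence, being bounded, cannot all be `1` on its closure. -/

theorem exists_dual_eq_one_of_le_norm_sub {E : Type*} [NormedAddCommGroup E] [NormedSpace ℝ E]
    (C : Submodule ℝ E) {y₀ : E} {r : ℝ} (hr : 0 < r) (hd : ∀ c ∈ C, r ≤ ‖y₀ - c‖) :
    ∃ g : StrongDual ℝ E, ‖g‖ ≤ r⁻¹ ∧ (∀ c ∈ C, g c = 0) ∧ g y₀ = 1 := by
  set q : E ⧸ C := Submodule.Quotient.mk y₀
  have hq : r ≤ ‖q‖ := by
    rw [show ‖q‖ = Metric.infDist y₀ C from QuotientAddGroup.norm_mk (S := C.toAddSubgroup) y₀]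
    exact (Metric.le_infDist ⟨0, C.zero_mem⟩).2 fun c hc => dist_eq_norm y₀ c ▸ hd c hc
  have hq0 : 0 < ‖q‖ := hr.trans_le hq
  obtain ⟨g, hg, hgq⟩ := exists_dual_vector ℝ q hq0.ne'
  have hmk : ‖C.mkQL‖ ≤ 1 :=
    C.mkQL.opNorm_le_bound zero_le_one fun x => by simpa using Submodule.Quotient.norm_mk_le C x
  refine ⟨‖q‖⁻¹ • g.comp C.mkQL, ?_, fun c hc => ?_, ?_⟩
  · calc ‖‖q‖⁻¹ • g.comp C.mkQL‖ ≤ ‖q‖⁻¹ * (‖g‖ * ‖C.mkQL‖) := by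
          rw [norm_smul, Real.norm_of_nonneg (by positivity)]
          gcongr
          exact g.opNorm_comp_le _
      _ ≤ ‖q‖⁻¹ * (1 * 1) := by rw [hg]; gcongr
      _ ≤ r⁻¹ := by rw [mul_one, mul_one]; exact inv_anti₀ hr hq
  · simp [(Submodule.Quotient.mk_eq_zero C).2 hc]
  · have : C.mkQL y₀ = q := rfl
    simp [this, hgq, hq0.ne']

theorem exists_forall_apply_eq_of_finiteDimensional {E : Type*} [NormedAddCommGroup E]
    [NormedSpace ℝ E] (V : Submodule ℝ (StrongDual ℝ E)) [FiniteDimensional ℝ V]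
    (H : StrongDual ℝ (StrongDual ℝ E)) : ∃ y : E, ∀ φ ∈ V, φ y = H φ := by
  let B : V →ₗ[ℝ] E →ₗ[ℝ] ℝ := ContinuousLinearMap.coeLM ℝ ∘ₗ V.subtype
  have hB : Function.Injective B := fun φ ψ h => Subtype.ext (ContinuousLinearMap.coe_injective h)
  let ℓ : V →ₗ[ℝ] ℝ := H.toLinearMap ∘ₗ V.subtype
  obtain ⟨y, hy⟩ := (LinearMap.flip_surjective_iff₁ (K := ℝ) (V₁ := V) (B := B)).2 hB ℓ
  exact ⟨y, fun φ hφ => LinearMap.congr_fun hy ⟨φ, hφ⟩⟩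

theorem exists_norm_le_forall_apply_eq {E : Type*} [NormedAddCommGroup E] [NormedSpace ℝ E]
    (V : Submodule ℝ (StrongDual ℝ E)) [FiniteDimensional ℝ V]
    (H : StrongDual ℝ (StrongDual ℝ E)) {ε : ℝ} (hε : 0 < ε) :
    ∃ x : E, ‖x‖ ≤ ‖H‖ + ε ∧ ∀ φ ∈ V, φ x = H φ := by
  obtain ⟨y₀, hy₀⟩ := exists_forall_apply_eq_of_finiteDimensional V H
  set W := V.map (ContinuousLinearMap.coeLM ℝ)
  by_contra! hfar
  -- Otherwise `y₀` is far from the common kernel of `V`; the functional `g` separating them lies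
  -- in `V` by finite-dimensional duality, so `1 = H g ≤ ‖H‖ / (‖H‖ + ε)`.
  have hd : ∀ c ∈ W.dualCoannihilator, ‖H‖ + ε ≤ ‖y₀ - c‖ := by
    intro c hc
    by_contra! hlt
    obtain ⟨φ, hφ, hne⟩ := hfar (y₀ - c) hlt.le
    have hφc : φ c = 0 := (Submodule.mem_dualCoannihilator c).1 hc _ ⟨φ, hφ, rfl⟩
    exact hne (by rw [map_sub, hφc, sub_zero, hy₀ φ hφ])
  obtain ⟨g, hg, hgC, hgy₀⟩ := exists_dual_eq_one_of_le_norm_sub _ (by positivity) hd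
  have hgV : g ∈ V := by
    have : g.toLinearMap ∈ W := by
      rw [← Subspace.dualCoannihilator_dualAnnihilator_eq (W := W)]
      exact (Submodule.mem_dualAnnihilator _).2 hgC
    obtain ⟨ψ, hψ, hψg⟩ := this
    exact ContinuousLinearMap.coe_injective hψg ▸ hψ
  have : 1 ≤ ‖H‖ * (‖H‖ + ε)⁻¹ :=
    calc 1 = H g := by rw [← hy₀ g hgV, hgy₀]
      _ ≤ ‖H g‖ := Real.le_norm_self _
      _ ≤ ‖H‖ * ‖g‖ := H.le_opNorm g
      _ ≤ ‖H‖ * (‖H‖ + ε)⁻¹ := by gcongr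
  rw [← div_eq_mul_inv, one_le_div (by positivity)] at this
  linarith

theorem exists_finset_subset_forall_mul_norm_lt {E : Type*} [NormedAddCommGroup E]
    [NormedSpace ℝ E] (S : Submodule ℝ E) [FiniteDimensional ℝ S] (P : Set (StrongDual ℝ E))
    {c : ℝ} (h : ∀ z ∈ S, z ≠ 0 → ∃ g ∈ P, c * ‖z‖ < g z) :
    ∃ G : Finset (StrongDual ℝ E), ↑G ⊆ P ∧ ∀ z ∈ S, z ≠ 0 → ∃ g ∈ G, c * ‖z‖ < g z := by
  have hK : IsCompact (((↑) : S → E) '' Metric.sphere 0 1) :=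
    (isCompact_sphere 0 1).image continuous_subtype_val
  have hU : ∀ g ∈ P, IsOpen {u : E | c * ‖u‖ < g u} := fun g _ =>
    isOpen_lt (continuous_const.mul continuous_norm) g.continuous
  have hcover : ((↑) : S → E) '' Metric.sphere 0 1 ⊆ ⋃ g ∈ P, {u : E | c * ‖u‖ < g u} := by
    rintro _ ⟨u, hu, rfl⟩
    have hu0 : (u : E) ≠ 0 := by
      intro h0
      simp [Submodule.coe_eq_zero.1 h0] at hu
    simpa using h u u.2 hu0
  obtain ⟨b, hbP, hb, hKb⟩ := hK.elim_finite_subcover_image hU hcover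
  refine ⟨hb.toFinset, by simpa using hbP, fun z hz hz0 => ?_⟩
  have hzn : 0 < ‖z‖ := norm_pos_iff.2 hz0
  have hu : (⟨‖z‖⁻¹ • z, S.smul_mem _ hz⟩ : S) ∈ Metric.sphere 0 1 := by
    simp [norm_smul, hzn.ne']
  obtain ⟨g, hgb, hg⟩ := Set.mem_iUnion₂.1 (hKb ⟨_, hu, rfl⟩)
  refine ⟨g, by simpa using hgb, ?_⟩
  have : ‖z‖⁻¹ * (c * ‖z‖) < ‖z‖⁻¹ * g z := by
    simpa [norm_smul, abs_of_pos hzn, mul_left_comm] using hg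
  exact lt_of_mul_lt_mul_left this (by positivity)

theorem exists_seq_forall_prefix {α : Type*} (P : List α → α → Prop)
    (h : ∀ L : List α, ∃ a, ∀ k ≤ L.length, P (L.take k) a) :
    ∃ x : ℕ → α, ∀ k n, k ≤ n → P ((List.range k).map x) (x n) := by
  choose next hnext using h
  let pre : ℕ → List α := fun n => Nat.rec [] (fun _ L => L ++ [next L]) n
  let x : ℕ → α := fun n => next (pre n)
  have hpre : ∀ n, pre n = (List.range n).map x := by
    intro n
    induction n with
    | zero => rfl
    | succ n ih => rw [List.range_succ, List.map_append, ← ih]; rfl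
  refine ⟨x, fun k n hkn => ?_⟩
  have htake : (pre n).take k = (List.range k).map x := by
    rw [hpre n, ← List.map_take, List.take_range, min_eq_left hkn]
  simpa [htake] using hnext (pre n) k (by simp [hpre n, hkn])

theorem BanachReflexive.exists_apply_eq_of_tendsto {Y : Type*} [NormedAddCommGroup Y]
    [NormedSpace ℝ Y] (hY : BanachReflexive Y) {y : ℕ → Y} {B : ℝ} (hy : ∀ n, ‖y n‖ ≤ B) :
    ∃ w : Y, ∀ (ψ : StrongDual ℝ Y) (l : ℝ),
      Tendsto (fun n => ψ (y n)) atTop (nhds l) → ψ w = l := by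
  let u : ℕ → WeakDual ℝ (StrongDual ℝ Y) := fun n => inclusionInDoubleDual ℝ Y (y n)
  obtain ⟨G, -, hG⟩ := (WeakDual.isCompact_closedBall (𝕜 := ℝ) 0 B).exists_mapClusterPt
    (f := atTop) (u := u) <| le_principal_iff.2 <| mem_map.2 <| univ_mem' fun n => by
      simp only [Set.mem_preimage, Metric.mem_closedBall, dist_zero_right]
      exact (double_dual_bound ℝ Y (y n)).trans (hy n)
  obtain ⟨w, hw⟩ := hY (WeakDual.toStrongDual G)
  refine ⟨w, fun ψ l hl => ?_⟩
  have hψ : MapClusterPt (G ψ) atTop (fun n => ψ (y n)) :=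
    hG.continuousAt_comp (WeakDual.eval_continuous ψ).continuousAt
  have hGψ : G ψ = l := eq_of_nhds_neBot (hψ.clusterPt.mono hl)
  rw [← hGψ]
  exact congrArg (fun Φ : StrongDual ℝ (StrongDual ℝ Y) => Φ ψ) hw

/-- `(x, f)` behaves like the summing basis of `c` paired with the coordinate functionals. -/
def IsTriangular (x : ℕ → X) (f : ℕ → StrongDual ℝ X) : Prop :=
  ∀ k n, f k (x n) = if k ≤ n then 1 else 0

theorem IsTriangular.comp_strictMono {x : ℕ → X} {f : ℕ → StrongDual ℝ X}
    (hxf : IsTriangular x f) {σ : ℕ → ℕ} (hσ : StrictMono σ) : IsTriangular (x ∘ σ) (f ∘ σ) :=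
  fun k n => by simp [hxf (σ k) (σ n), hσ.le_iff_le]

theorem IsTriangular.eventually_apply_eq_zero {x : ℕ → X} {f : ℕ → StrongDual ℝ X}
    (hxf : IsTriangular x f) {z : X} (hz : z ∈ Submodule.span ℝ (Set.range x)) :
    ∀ᶠ k in atTop, f k z = 0 := by
  induction hz using Submodule.span_induction with
  | mem _ hz =>
    obtain ⟨n, rfl⟩ := hz
    filter_upwards [eventually_gt_atTop n] with k hk
    simp [hxf k n, hk.not_ge]
  | zero => simp
  | add _ _ _ _ h₁ h₂ => filter_upwards [h₁, h₂] with k h₁ h₂; simp [h₁, h₂]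
  | smul _ _ _ h => filter_upwards [h] with k h; simp [h]

theorem IsTriangular.not_banachReflexive_closedSpan {x : ℕ → X} {f : ℕ → StrongDual ℝ X}
    (hxf : IsTriangular x f) {B C : ℝ} (hx : ∀ n, ‖x n‖ ≤ C) (hf : ∀ k, ‖f k‖ ≤ B) :
    ¬ BanachReflexive (closedSpan x) := by
  intro hZ
  have hxZ : ∀ n, x n ∈ closedSpan x := fun n =>
    Submodule.le_topologicalClosure _ (Submodule.subset_span ⟨n, rfl⟩)
  obtain ⟨w, hw⟩ := BanachReflexive.exists_apply_eq_of_tendsto hZ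
    (y := fun n => ⟨x n, hxZ n⟩) hx
  have hfw : ∀ k, f k w = 1 := fun k =>
    hw ((f k).comp (closedSpan x).subtypeL) 1 <| tendsto_const_nhds.congr' <|
      (eventually_ge_atTop k).mono fun n hn => by simp [hxf k n, hn]
  have hB : 0 ≤ B := (norm_nonneg _).trans (hf 0)
  have hw' : (w : X) ∈ closure (Submodule.span ℝ (Set.range x) : Set X) := w.2
  obtain ⟨z, hz, hwz⟩ := Metric.mem_closure_iff.1 hw' (B + 1)⁻¹ (by positivity)
  obtain ⟨k, hk⟩ := (hxf.eventually_apply_eq_zero hz).exists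
  have : 1 ≤ B * (B + 1)⁻¹ :=
    calc 1 = f k (w - z) := by simp [hfw k, hk]
      _ ≤ ‖f k‖ * ‖(w : X) - z‖ := (Real.le_norm_self _).trans ((f k).le_opNorm _)
      _ ≤ B * (B + 1)⁻¹ := by rw [← dist_eq_norm]; gcongr; exact hf k
  rw [← div_eq_mul_inv, one_le_div (by positivity)] at this
  linarith

theorem IsTriangular.semiNormalized {x : ℕ → X} {f : ℕ → StrongDual ℝ X} (hxf : IsTriangular x f)
    {B C : ℝ} (hx : ∀ n, ‖x n‖ ≤ C) (hf : ∀ k, ‖f k‖ ≤ B) : SemiNormalized x := by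
  have h1 : ∀ n, 1 ≤ B * ‖x n‖ := fun n =>
    calc (1 : ℝ) = f n (x n) := by simp [hxf n n]
      _ ≤ ‖f n‖ * ‖x n‖ := (Real.le_norm_self _).trans ((f n).le_opNorm _)
      _ ≤ B * ‖x n‖ := by gcongr; exact hf n
  have hB : 0 < B := by nlinarith [h1 0, norm_nonneg (x 0), (norm_nonneg (f 0)).trans (hf 0)]
  exact ⟨B⁻¹, C, by positivity, fun n => ⟨(inv_le_iff_one_le_mul₀' hB).2 (h1 n), hx n⟩⟩

theorem isBasicSeq_of_forall_exists_norming {x : ℕ → X} (hx : ∀ n, x n ≠ 0) {K : ℝ}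
    (hK : ∀ m, ∀ z ∈ Submodule.span ℝ (x '' Set.Iio m), z ≠ 0 → ∃ g : StrongDual ℝ X,
      ‖g‖ ≤ K ∧ ‖z‖ ≤ g z ∧ ∀ n, m ≤ n → g (x n) = 0) :
    IsBasicSeq x := by
  refine ⟨hx, max 1 K, le_max_left _ _, fun a m n hmn => ?_⟩
  rcases eq_or_ne (PartialSum x a m) 0 with h0 | h0
  · rw [h0, norm_zero]
    positivity
  have hm : PartialSum x a m ∈ Submodule.span ℝ (x '' Set.Iio m) :=
    Submodule.sum_mem _ fun i hi => Submodule.smul_mem _ _ <|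
      Submodule.subset_span ⟨i, Finset.mem_range.1 hi, rfl⟩
  obtain ⟨g, hgK, hgm, hg⟩ := hK m _ hm h0
  have htail : g (PartialSum x a n) = g (PartialSum x a m) := by
    have : g (∑ i ∈ Finset.Ico m n, a i • x i) = 0 := by
      rw [map_sum]
      exact Finset.sum_eq_zero fun i hi => by rw [map_smul, hg i (Finset.mem_Ico.1 hi).1, smul_zero]
    rw [PartialSum, PartialSum, ← Finset.sum_range_add_sum_Ico _ hmn, map_add, this, add_zero]
  calc ‖PartialSum x a m‖ ≤ g (PartialSum x a n) := htail ▸ hgm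
    _ ≤ ‖g‖ * ‖PartialSum x a n‖ := (Real.le_norm_self _).trans (g.le_opNorm _)
    _ ≤ max 1 K * ‖PartialSum x a n‖ := by gcongr; exact hgK.trans (le_max_right _ _)

theorem exists_apply_eq_one_forall_eq_zero (F : StrongDual ℝ (StrongDual ℝ X)) {d : ℝ}
    (hd : 0 < d) (hF : ∀ y : X, d ≤ ‖F - inclusionInDoubleDual ℝ X y‖) {s : Set X}
    (hs : s.Finite) :
    ∃ f : StrongDual ℝ X, ‖f‖ ≤ d⁻¹ + 1 ∧ F f = 1 ∧ ∀ y ∈ s, f y = 0 := by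
  obtain ⟨Φ, hΦ, hΦJ, hΦF⟩ := exists_dual_eq_one_of_le_norm_sub
    (inclusionInDoubleDual ℝ X).toLinearMap.range (y₀ := F) hd
    (by rintro _ ⟨y, rfl⟩; exact hF y)
  let V := Submodule.span ℝ (insert F (inclusionInDoubleDual ℝ X '' s))
  have : FiniteDimensional ℝ V := FiniteDimensional.span_of_finite ℝ ((hs.image _).insert F)
  obtain ⟨f, hf, hfV⟩ := exists_norm_le_forall_apply_eq V Φ one_pos
  refine ⟨f, hf.trans (by gcongr), ?_, fun y hy => ?_⟩
  · rw [hfV F (Submodule.subset_span (Set.mem_insert _ _)), hΦF]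
  · rw [← dual_def ℝ X,
      hfV _ (Submodule.subset_span (Set.mem_insert_of_mem _ ⟨y, hy, rfl⟩))]
    exact hΦJ _ ⟨y, rfl⟩

theorem exists_apply_eq_zero_apply_eq_norm (F : StrongDual ℝ (StrongDual ℝ X)) {d : ℝ}
    (hd : 0 < d) (hF : ∀ y : X, d ≤ ‖F - inclusionInDoubleDual ℝ X y‖) (z : X) :
    ∃ g : StrongDual ℝ X, ‖g‖ ≤ 1 + ‖F‖ * (d⁻¹ + 1) ∧ F g = 0 ∧ g z = ‖z‖ := by
  obtain ⟨h, hh, hhz⟩ := exists_dual_vector'' ℝ z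
  obtain ⟨f, hf, hfF, hfz⟩ := exists_apply_eq_one_forall_eq_zero F hd hF (Set.finite_singleton z)
  refine ⟨h - F h • f, ?_, by simp [hfF], by simp [hfz z rfl, hhz]⟩
  calc ‖h - F h • f‖ ≤ ‖h‖ + ‖F‖ * ‖h‖ * ‖f‖ := by
        grw [norm_sub_le, norm_smul, Real.norm_eq_abs, ← Real.norm_eq_abs, F.le_opNorm]
    _ ≤ 1 + ‖F‖ * 1 * (d⁻¹ + 1) := by gcongr
    _ = 1 + ‖F‖ * (d⁻¹ + 1) := by ring

theorem exists_finset_norming_span (F : StrongDual ℝ (StrongDual ℝ X)) {d : ℝ} (hd : 0 < d)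
    (hF : ∀ y : X, d ≤ ‖F - inclusionInDoubleDual ℝ X y‖) {s : Set X} (hs : s.Finite) :
    ∃ G : Finset (StrongDual ℝ X), (∀ g ∈ G, ‖g‖ ≤ 2 * (1 + ‖F‖ * (d⁻¹ + 1)) ∧ F g = 0) ∧
      ∀ z ∈ Submodule.span ℝ s, z ≠ 0 → ∃ g ∈ G, ‖z‖ < g z := by
  have : FiniteDimensional ℝ (Submodule.span ℝ s) := FiniteDimensional.span_of_finite ℝ hs
  obtain ⟨G, hGP, hG⟩ := exists_finset_subset_forall_mul_norm_lt (Submodule.span ℝ s)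
    {g | ‖g‖ ≤ 2 * (1 + ‖F‖ * (d⁻¹ + 1)) ∧ F g = 0} (c := 1) fun z _ hz => by
      obtain ⟨g, hg, hgF, hgz⟩ := exists_apply_eq_zero_apply_eq_norm F hd hF z
      refine ⟨(2 : ℝ) • g, ⟨?_, by simp [hgF]⟩, ?_⟩
      · rw [norm_smul, Real.norm_two]; gcongr
      · simp [hgz, norm_pos_iff.2 hz]
  exact ⟨G, fun g hg => hGP hg, by simpa using hG⟩

theorem exists_isTriangular_isBasicSeq (F : StrongDual ℝ (StrongDual ℝ X)) {d : ℝ} (hd : 0 < d)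
    (hF : ∀ y : X, d ≤ ‖F - inclusionInDoubleDual ℝ X y‖) :
    ∃ (x : ℕ → X) (f : ℕ → StrongDual ℝ X), IsTriangular x f ∧ IsBasicSeq x ∧
      (∀ n, ‖x n‖ ≤ ‖F‖ + 1) ∧ ∀ k, ‖f k‖ ≤ d⁻¹ + 1 := by
  classical
  choose f hf hfF hf0 using fun L : List X =>
    exists_apply_eq_one_forall_eq_zero F hd hF (List.finite_toSet L)
  choose G hG hGz using fun L : List X => exists_finset_norming_span F hd hF (List.finite_toSet L)
  let T : List X → Finset (StrongDual ℝ X) := fun L => insert (f L) (G L)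
  obtain ⟨x, hx⟩ := exists_seq_forall_prefix
    (fun L a => ‖a‖ ≤ ‖F‖ + 1 ∧ ∀ φ ∈ T L, φ a = F φ) fun L => by
      obtain ⟨a, ha, haF⟩ := exists_norm_le_forall_apply_eq
        (Submodule.span ℝ ↑((Finset.range (L.length + 1)).biUnion fun k => T (L.take k))) F one_pos
      exact ⟨a, fun k hk => ⟨ha, fun φ hφ => haF φ <| Submodule.subset_span <|
        Finset.mem_biUnion.2 ⟨k, Finset.mem_range.2 (Nat.lt_succ_of_le hk), hφ⟩⟩⟩
  have hxf : IsTriangular x fun k => f ((List.range k).map x) := by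
    intro k n
    split_ifs with hkn
    · rw [(hx k n hkn).2 _ (Finset.mem_insert_self _ _), hfF]
    · exact hf0 _ _ (by simpa using ⟨n, by omega, rfl⟩)
  refine ⟨x, _, hxf, isBasicSeq_of_forall_exists_norming (fun n h0 => by simpa [h0] using hxf n n)
    (K := 2 * (1 + ‖F‖ * (d⁻¹ + 1))) fun m z hz hz0 => ?_, fun n => (hx 0 n n.zero_le).1,
    fun k => hf _⟩
  obtain ⟨g, hgG, hgz⟩ := hGz ((List.range m).map x) z (by simpa [Set.image] using hz) hz0
  exact ⟨g, (hG _ g hgG).1, hgz.le, fun n hmn => by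
    rw [(hx m n hmn).2 g (Finset.mem_insert_of_mem hgG), (hG _ g hgG).2]⟩

theorem exists_pos_forall_le_norm_sub_inclusionInDoubleDual [CompleteSpace X]
    {F : StrongDual ℝ (StrongDual ℝ X)} (hF : F ∉ Set.range (inclusionInDoubleDual ℝ X)) :
    ∃ d > 0, ∀ y : X, d ≤ ‖F - inclusionInDoubleDual ℝ X y‖ := by
  have hJ : Isometry (inclusionInDoubleDual ℝ X) := (inclusionInDoubleDualLi ℝ).isometry
  have hclosed : IsClosed (Set.range (inclusionInDoubleDual ℝ X)) :=
    hJ.isClosedEmbedding.isClosed_range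
  obtain ⟨ε, hε, hball⟩ := Metric.isOpen_iff.1 hclosed.isOpen_compl F hF
  exact ⟨ε, hε, fun y => not_lt.1 fun h =>
    hball ((mem_ball_iff_norm' (E := StrongDual ℝ (StrongDual ℝ X))).2 h) ⟨y, rfl⟩⟩

/-- if every semi-normalized basic sequence in `X` has a
subsequence spanning a reflexive subspace, then `X` is reflexive. -/
theorem stmt9 {X : Type*} [NormedAddCommGroup X] [NormedSpace ℝ X] [CompleteSpace X]
    (h : ∀ x : ℕ → X, IsBasicSeq x → SemiNormalized x →
      ∃ σ : ℕ → ℕ, StrictMono σ ∧ BanachReflexive ↥(closedSpan (x ∘ σ))) :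
    BanachReflexive X := by
  by_contra hX
  obtain ⟨F, hF⟩ := not_forall.1 hX
  obtain ⟨d, hd, hFd⟩ := exists_pos_forall_le_norm_sub_inclusionInDoubleDual hF
  obtain ⟨x, f, hxf, hbasic, hx, hf⟩ := exists_isTriangular_isBasicSeq F hd hFd
  obtain ⟨σ, hσ, hrefl⟩ := h x hbasic (hxf.semiNormalized hx hf)
  exact (hxf.comp_strictMono hσ).not_banachReflexive_closedSpan (fun n => hx (σ n))
    (fun k => hf (σ k)) hrefl
end
end

section
/- Let {e_n} be a strongly summing basic sequence spanning a space whose difference sequence {v_n} is a shrinking basis of [e_n] with coordinate functionals {v_n*}. Define e_n* = v_n* - v_{n+1}*. Then {e_n*} is the sequence of coordinate functionals associated to {e_n}, and the closed span [e_n*] has codimension 1 in [e_n]* = [v_n*]; indeed [e_n]* = [e_n*] ⊕ span{v_1*}. -/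
open Filter Finset NormedSpace

noncomputable section

variable {X : Type*} [NormedAddCommGroup X] [NormedSpace ℝ X]

/-!
Since `e m = ∑_{i ≤ m} v i`, the functionals `e*_n = g n - g (n + 1)` are biorthogonal to `e`.
As `v` is shrinking, a functional `f` is uniformly small on the tail spans of `v`, so `f` is the
norm limit of `∑_{i<n} f (v i) • g i`; in particular the `g n` span `X*`. Abel summation rewrites
this partial sum as `∑_{i<n} f (e i) • e*_i + f (e (n - 1)) • g n`, and `f (e (n - 1)) → Φ f`, where
`Φ ∈ X**` is the weak limit of the weakly Cauchy sequence `e` (continuous by uniform boundedness).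
Hence `f - Φ f • g 0 ∈ [e*_n]`, while `Φ` kills every `e*_n` and `Φ (g 0) = 1`: so `[e*_n] = ker Φ`,
a closed hyperplane complemented by `g 0`.
-/

open Topology

omit [NormedSpace ℝ X] in
theorem sum_range_succ_diffSeq (e : ℕ → X) (m : ℕ) :
    ∑ i ∈ range (m + 1), diffSeq e i = e m := by
  induction m with
  | zero => simp [diffSeq]
  | succ m ih => rw [sum_range_succ, ih]; simp [diffSeq]

section Biorthogonal

variable {e : ℕ → X} {g : ℕ → StrongDual ℝ X}
  (hg : ∀ n m, g n (diffSeq e m) = if n = m then 1 else 0)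
include hg

theorem apply_eq_ite_le_of_diffSeq (n m : ℕ) : g n (e m) = if n ≤ m then 1 else 0 := by
  rw [← sum_range_succ_diffSeq e m, map_sum, sum_congr rfl fun i _ => hg n i, sum_ite_eq]
  simp

theorem sub_succ_apply_eq_ite_of_diffSeq (n m : ℕ) :
    (g n - g (n + 1)) (e m) = if n = m then 1 else 0 := by
  simp only [sub_apply, apply_eq_ite_le_of_diffSeq hg]
  split_ifs <;> first | omega | norm_num

end Biorthogonal

theorem mem_closedSpan_of_tendsto {M : Type*} [NormedAddCommGroup M] [NormedSpace ℝ M]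
    {g : ℕ → M} {x : ℕ → M} {y : M} (hx : Tendsto x atTop (𝓝 y))
    (hmem : ∀ n, x n ∈ Submodule.span ℝ (Set.range g)) : y ∈ closedSpan g := by
  rw [closedSpan, ← SetLike.mem_coe, Submodule.topologicalClosure_coe]
  exact mem_closure_of_tendsto hx (Eventually.of_forall hmem)

theorem Shrinking.exists_abs_le_mul_norm {e : ℕ → X} (h : Shrinking e) (f : StrongDual ℝ X)
    {ε : ℝ} (hε : 0 < ε) : ∃ N, ∀ n ≥ N, ∀ y ∈ tailSpan e n, |f y| ≤ ε * ‖y‖ := by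
  obtain ⟨N, hN⟩ := h f ε hε
  refine ⟨N, fun n hn y hy => ?_⟩
  rcases eq_or_ne y 0 with rfl | hy0
  · simp
  have hy := hN n hn (‖y‖⁻¹ • y) (Submodule.smul_mem _ _ hy) <| by
    rw [norm_smul, norm_inv, norm_norm, inv_mul_cancel₀ (norm_ne_zero_iff.2 hy0)]
  rwa [map_smul, smul_eq_mul, abs_mul, abs_inv, abs_norm,
    inv_mul_le_iff₀ (norm_pos_iff.2 hy0), mul_comm] at hy

def IsSchauderBasis.toSchauderBasis {v : ℕ → X} {g : ℕ → StrongDual ℝ X}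
    (h : IsSchauderBasis v g) : SchauderBasis ℝ X where
  basis := v
  coord := g
  ortho i j := by simp [h.1, Pi.single_apply]
  expansion x := by
    rw [HasSum, SummationFilter.conditional_filter_eq_map_range, tendsto_map'_iff]
    exact h.2 x

namespace SchauderBasis

variable (b : SchauderBasis ℝ X)

theorem sub_proj_mem_tailSpan (n : ℕ) (x : X) : x - b.proj n x ∈ tailSpan b n := by
  rw [tailSpan, ← SetLike.mem_coe, Submodule.topologicalClosure_coe]
  refine mem_closure_of_tendsto ((b.tendsto_proj x).sub_const (b.proj n x)) ?_
  filter_upwards [eventually_ge_atTop n] with m hm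
  rw [proj_apply, proj_apply, ← sum_Ico_eq_sub _ hm]
  exact Submodule.sum_smul_mem _ _ fun i hi => Submodule.subset_span ⟨i, (mem_Ico.1 hi).1, rfl⟩

theorem tendsto_sum_apply_smul_coord [CompleteSpace X] (hb : Shrinking b) (f : StrongDual ℝ X) :
    Tendsto (fun n => ∑ i ∈ range n, f (b i) • b.coord i) atTop (𝓝 f) := by
  obtain ⟨C, hC⟩ := b.exists_norm_proj_le
  have hC0 : 0 ≤ C := (norm_nonneg _).trans (hC 0)
  refine Metric.tendsto_atTop.2 fun δ hδ => ?_
  obtain ⟨N, hN⟩ := hb.exists_abs_le_mul_norm f (ε := δ / (2 * (1 + C))) (by positivity)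
  refine ⟨N, fun n hn => ?_⟩
  have hremainder : f - ∑ i ∈ range n, f (b i) • b.coord i = f.comp (1 - b.proj n) := by
    ext x
    simp [mul_comm]
  have hnorm : ‖f.comp (1 - b.proj n)‖ ≤ δ / 2 := by
    refine ContinuousLinearMap.opNorm_le_bound _ (by positivity) fun x => ?_
    have hPx := (b.proj n).le_of_opNorm_le (hC n) x
    calc ‖f (x - b.proj n x)‖ ≤ δ / (2 * (1 + C)) * ‖x - b.proj n x‖ :=
          hN n hn _ (b.sub_proj_mem_tailSpan n x)
      _ ≤ δ / (2 * (1 + C)) * ((1 + C) * ‖x‖) := by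
          gcongr
          linarith [norm_sub_le x (b.proj n x)]
      _ = δ / 2 * ‖x‖ := by field_simp
  rw [dist_comm, dist_eq_norm, hremainder]
  linarith

theorem closedSpan_coord_eq_top [CompleteSpace X] (hb : Shrinking b) : closedSpan b.coord = ⊤ :=
  eq_top_iff.2 fun f _ => mem_closedSpan_of_tendsto (b.tendsto_sum_apply_smul_coord hb f)
    fun _ => Submodule.sum_smul_mem _ _ fun i _ => Submodule.subset_span ⟨i, rfl⟩

end SchauderBasis

theorem sum_range_smul_eq_sum_partialSum_smul_sub {R M : Type*} [CommRing R] [AddCommGroup M]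
    [Module R M] (c : ℕ → R) (g : ℕ → M) (n : ℕ) :
    ∑ i ∈ range n, c i • g i =
      ∑ i ∈ range n, (∑ j ∈ range (i + 1), c j) • (g i - g (i + 1)) +
        (∑ i ∈ range n, c i) • g n := by
  induction n with
  | zero => simp
  | succ n ih =>
    rw [sum_range_succ, ih, sum_range_succ, sum_range_succ c n]
    module

theorem sub_smul_mem_closedSpan_sub_succ {M : Type*} [NormedAddCommGroup M] [NormedSpace ℝ M]
    {c : ℕ → ℝ} {g : ℕ → M} {x : M} {s : ℝ}
    (hx : Tendsto (fun n => ∑ i ∈ range n, c i • g i) atTop (𝓝 x))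
    (hs : Tendsto (fun n => ∑ i ∈ range n, c i) atTop (𝓝 s)) :
    x - s • g 0 ∈ closedSpan fun n => g n - g (n + 1) := by
  refine mem_closedSpan_of_tendsto (hx.sub (hs.smul_const (g 0))) fun n => ?_
  rw [sum_range_smul_eq_sum_partialSum_smul_sub, add_sub_assoc, ← smul_sub, ← neg_sub,
    ← sum_range_sub', smul_neg]
  exact add_mem (Submodule.sum_smul_mem _ _ fun i _ => Submodule.subset_span ⟨i, rfl⟩)
    (neg_mem (Submodule.smul_mem _ _
      (Submodule.sum_mem _ fun i _ => Submodule.subset_span ⟨i, rfl⟩)))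

theorem LinearMap.isCompl_ker_span_singleton {K V : Type*} [Field K] [AddCommGroup V]
    [Module K V] (φ : V →ₗ[K] K) {w : V} (hw : φ w ≠ 0) : IsCompl (ker φ) (K ∙ w) :=
  Submodule.isCompl_span_singleton_of_isCoatom_of_notMem
    (isCoatom_ker_of_surjective (φ.surjective (by rintro rfl; exact hw rfl))) hw

namespace WeaklyCauchy

variable {e : ℕ → X}

def limit (h : WeaklyCauchy e) : StrongDual ℝ (StrongDual ℝ X) :=
  continuousLinearMapOfTendsto (fun n => inclusionInDoubleDual ℝ X (e n))
    (f := fun f => (h f).choose) (tendsto_pi_nhds.2 fun f => (h f).choose_spec)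

theorem tendsto_limit (h : WeaklyCauchy e) (f : StrongDual ℝ X) :
    Tendsto (fun n => f (e n)) atTop (𝓝 (h.limit f)) :=
  (h f).choose_spec

theorem limit_eq_of_eventually_eq (h : WeaklyCauchy e) {f : StrongDual ℝ X} {c : ℝ}
    (hf : ∀ᶠ n in atTop, f (e n) = c) : h.limit f = c :=
  tendsto_nhds_unique (h.tendsto_limit f) (tendsto_const_nhds.congr' (hf.mono fun _ => Eq.symm))

variable (he : WeaklyCauchy e) {g : ℕ → StrongDual ℝ X}
  (hg : IsSchauderBasis (diffSeq e) g)
include he hg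

theorem limit_apply_coord_zero : he.limit (g 0) = 1 :=
  he.limit_eq_of_eventually_eq <| Eventually.of_forall fun m => by
    simp [apply_eq_ite_le_of_diffSeq hg.1]

theorem limit_apply_sub_succ (n : ℕ) : he.limit (g n - g (n + 1)) = 0 := by
  refine he.limit_eq_of_eventually_eq ?_
  filter_upwards [eventually_gt_atTop n] with m hm
  rw [sub_succ_apply_eq_ite_of_diffSeq hg.1, if_neg hm.ne]

theorem sub_limit_smul_mem_closedSpan [CompleteSpace X] (hshr : Shrinking (diffSeq e))
    (f : StrongDual ℝ X) : f - he.limit f • g 0 ∈ closedSpan fun n => g n - g (n + 1) := by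
  have hsum : Tendsto (fun n => ∑ i ∈ range n, f (diffSeq e i)) atTop (𝓝 (he.limit f)) :=
    (tendsto_add_atTop_iff_nat 1).1 <| by
      simpa only [← map_sum, sum_range_succ_diffSeq] using he.tendsto_limit f
  exact sub_smul_mem_closedSpan_sub_succ (hg.toSchauderBasis.tendsto_sum_apply_smul_coord hshr f)
    hsum

theorem closedSpan_sub_succ_eq_ker_limit [CompleteSpace X] (hshr : Shrinking (diffSeq e)) :
    closedSpan (fun n => g n - g (n + 1)) =
      LinearMap.ker (he.limit : StrongDual ℝ X →ₗ[ℝ] ℝ) := by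
  refine le_antisymm (Submodule.topologicalClosure_minimal _ (Submodule.span_le.2 ?_)
    he.limit.isClosed_ker) fun f hf => ?_
  · rintro _ ⟨n, rfl⟩
    exact he.limit_apply_sub_succ hg n
  · have hf' : he.limit f = 0 := hf
    simpa [hf'] using he.sub_limit_smul_mem_closedSpan hg hshr f

end WeaklyCauchy

theorem stmt10_general {X : Type*} [NormedAddCommGroup X] [NormedSpace ℝ X] [CompleteSpace X]
    (e : ℕ → X) (hss : StronglySumming e)
    (g : ℕ → X →L[ℝ] ℝ) (hgbasis : IsSchauderBasis (diffSeq e) g)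
    (hshr : Shrinking (diffSeq e))
    (estar : ℕ → X →L[ℝ] ℝ) (hestar : ∀ n, estar n = g n - g (n+1)) :
    (∀ n m, estar n (e m) = if n = m then 1 else 0) ∧
    closedSpan g = (⊤ : Submodule ℝ (StrongDual ℝ X)) ∧
    IsCompl (closedSpan estar) (Submodule.span ℝ {g 0}) ∧
    Module.finrank ℝ ((StrongDual ℝ X) ⧸ closedSpan estar) = 1 := by
  obtain rfl : estar = fun n => g n - g (n + 1) := funext hestar
  have hlimit := hss.1.limit_apply_coord_zero hgbasis
  have hcompl : IsCompl (closedSpan fun n => g n - g (n + 1)) (Submodule.span ℝ {g 0}) := by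
    rw [hss.1.closedSpan_sub_succ_eq_ker_limit hgbasis hshr]
    exact LinearMap.isCompl_ker_span_singleton _ (by simp [hlimit])
  refine ⟨sub_succ_apply_eq_ite_of_diffSeq hgbasis.1,
    hgbasis.toSchauderBasis.closedSpan_coord_eq_top hshr, hcompl, ?_⟩
  rw [(Submodule.quotientEquivOfIsCompl _ _ hcompl).finrank_eq]
  exact finrank_span_singleton fun h => by simp [h] at hlimit

/-- if `{e n}` is a strongly summing basic sequence spanning `X`
whose difference sequence is a shrinking basis of `X` with coordinate
functionals `g`, then `e* n := g n - g (n+1)` are the coordinate functionals of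
`{e n}`, the dual is spanned by `{g n}`, and the closed span of `{e* n}` has
codimension one: `X* = [e* n] ⊕ span{g 0}`. -/
theorem stmt10 {X : Type*} [NormedAddCommGroup X] [NormedSpace ℝ X] [CompleteSpace X]
    (e : ℕ → X) (hb : IsBasicSeq e) (hss : StronglySumming e)
    (hspan : closedSpan e = ⊤)
    (g : ℕ → X →L[ℝ] ℝ) (hgbasis : IsSchauderBasis (diffSeq e) g)
    (hshr : Shrinking (diffSeq e))
    (estar : ℕ → X →L[ℝ] ℝ) (hestar : ∀ n, estar n = g n - g (n+1)) :
    (∀ n m, estar n (e m) = if n = m then 1 else 0) ∧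
    closedSpan g = (⊤ : Submodule ℝ (StrongDual ℝ X)) ∧
    IsCompl (closedSpan estar) (Submodule.span ℝ {g 0}) ∧
    Module.finrank ℝ ((StrongDual ℝ X) ⧸ closedSpan estar) = 1 :=
  stmt10_general e hss g hgbasis hshr estar hestar
end
end

section
/- Let {e_n} be a basic sequence and {v_n} a sequence in a Banach space with ∑_n ‖e_n - v_n‖ < ∞ sufficiently small relative to the basis constant and lower bound of {e_n} (e.g., ∑ ‖e_n - v_n‖ < 1/(2K) where K is determined by the basis constant and inf ‖e_n‖). If {e_n} is boundedly complete, then {v_n} is a boundedly complete basic sequence equivalent to {e_n}. -/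
open Filter Finset NormedSpace

noncomputable section

variable {X : Type*} [NormedAddCommGroup X] [NormedSpace ℝ X]

/-!
Write `θ = (2K / c) ∑ ‖e n - v n‖ < 1`. Since `|a i| ‖e i‖` is the norm of the difference of two
consecutive partial sums, the basis inequality bounds every coefficient by `(2K / c)` times any
later partial sum of `∑ a i e i`; hence the partial sums of `∑ a i (e i - v i)` are at most `θ`
times those of `∑ a i e i`. So the partial sums of `∑ a i e i` and `∑ a i v i` are comparable up to
the factors `1 ± θ`, which transfers the basis inequality and boundedness. Bounded partial sums
also give bounded coefficients, so `∑ a i (e i - v i)` then converges absolutely, and the two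
series converge together.
-/

section Norm

variable {E : Type*} [SeminormedAddCommGroup E] {x y : E} {θ : ℝ}

lemma one_sub_mul_norm_le_of_norm_sub_le (h : ‖x - y‖ ≤ θ * ‖x‖) : (1 - θ) * ‖x‖ ≤ ‖y‖ := by
  linarith [norm_sub_norm_le x y]

lemma norm_le_one_add_mul_of_norm_sub_le (h : ‖x - y‖ ≤ θ * ‖x‖) : ‖y‖ ≤ (1 + θ) * ‖x‖ := by
  linarith [norm_sub_norm_le y x, norm_sub_rev x y]

end Norm

lemma partialSum_sub (e v : ℕ → X) (a : ℕ → ℝ) (n : ℕ) :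
    PartialSum e a n - PartialSum v a n = PartialSum (fun i => e i - v i) a n := by
  simp only [PartialSum, smul_sub, sum_sub_distrib]

lemma SeriesConverges.boundedPartialSums {e : ℕ → X} {a : ℕ → ℝ} (h : SeriesConverges e a) :
    BoundedPartialSums e a := by
  obtain ⟨x, hx⟩ := h
  obtain ⟨M, hM⟩ := hx.norm.bddAbove_range
  exact ⟨M, fun n => hM (Set.mem_range_self n)⟩

lemma seriesConverges_iff_of_seriesConverges_sub {e v : ℕ → X} {a : ℕ → ℝ}
    (h : SeriesConverges (fun i => e i - v i) a) :
    SeriesConverges e a ↔ SeriesConverges v a := by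
  obtain ⟨d, hd⟩ := h
  have hv : PartialSum v a = fun n => PartialSum e a n - PartialSum (fun i => e i - v i) a n := by
    funext n
    rw [← partialSum_sub, sub_sub_cancel]
  constructor
  · rintro ⟨x, hx⟩
    exact ⟨x - d, hv ▸ hx.sub hd⟩
  · rintro ⟨y, hy⟩
    refine ⟨y + d, ?_⟩
    rw [hv] at hy
    simpa using hy.add hd

lemma seriesConverges_of_abs_le [CompleteSpace X] {d : ℕ → X} {a : ℕ → ℝ} {B : ℝ}
    (ha : ∀ i, |a i| ≤ B) (hd : Summable fun i => ‖d i‖) : SeriesConverges d a := by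
  have hsummable : Summable fun i => a i • d i :=
    (hd.mul_left B).of_norm_bounded fun i => by
      rw [norm_smul, Real.norm_eq_abs]
      exact mul_le_mul_of_nonneg_right (ha i) (norm_nonneg _)
  exact ⟨_, hsummable.hasSum.tendsto_sum_nat⟩

lemma norm_partialSum_le_of_abs_le {d : ℕ → X} {a : ℕ → ℝ} {B : ℝ} {n : ℕ} (hB : 0 ≤ B)
    (ha : ∀ i < n, |a i| ≤ B) (hd : Summable fun i => ‖d i‖) :
    ‖PartialSum d a n‖ ≤ B * ∑' i, ‖d i‖ := by
  calc ‖PartialSum d a n‖ ≤ ∑ i ∈ range n, |a i| * ‖d i‖ := by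
        simpa only [PartialSum, norm_smul, Real.norm_eq_abs] using
          norm_sum_le (range n) fun i => a i • d i
    _ ≤ ∑ i ∈ range n, B * ‖d i‖ := by
        gcongr with i hi
        exact ha i (mem_range.mp hi)
    _ ≤ B * ∑' i, ‖d i‖ := by
        rw [← mul_sum]
        exact mul_le_mul_of_nonneg_left (hd.sum_le_tsum _ fun i _ => norm_nonneg _) hB

section Basis

variable {e : ℕ → X} {K c : ℝ}

lemma abs_mul_norm_le_of_basis
    (hbasis : ∀ (a : ℕ → ℝ) (m n : ℕ), m ≤ n → ‖PartialSum e a m‖ ≤ K * ‖PartialSum e a n‖)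
    (a : ℕ → ℝ) {i n : ℕ} (hin : i < n) :
    |a i| * ‖e i‖ ≤ 2 * K * ‖PartialSum e a n‖ := by
  have hstep : a i • e i = PartialSum e a (i + 1) - PartialSum e a i := by
    simp only [PartialSum, sum_range_succ, add_sub_cancel_left]
  calc |a i| * ‖e i‖ = ‖PartialSum e a (i + 1) - PartialSum e a i‖ := by
        rw [← hstep, norm_smul, Real.norm_eq_abs]
    _ ≤ ‖PartialSum e a (i + 1)‖ + ‖PartialSum e a i‖ := norm_sub_le _ _
    _ ≤ K * ‖PartialSum e a n‖ + K * ‖PartialSum e a n‖ :=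
        add_le_add (hbasis a _ _ hin) (hbasis a _ _ hin.le)
    _ = 2 * K * ‖PartialSum e a n‖ := by ring

lemma abs_le_of_basis (hc : 0 < c)
    (hbasis : ∀ (a : ℕ → ℝ) (m n : ℕ), m ≤ n → ‖PartialSum e a m‖ ≤ K * ‖PartialSum e a n‖)
    (hlow : ∀ n, c ≤ ‖e n‖) (a : ℕ → ℝ) {i n : ℕ} (hin : i < n) :
    |a i| ≤ 2 * K / c * ‖PartialSum e a n‖ := by
  rw [div_mul_eq_mul_div, le_div_iff₀ hc]
  calc |a i| * c ≤ |a i| * ‖e i‖ := mul_le_mul_of_nonneg_left (hlow i) (abs_nonneg _)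
    _ ≤ 2 * K * ‖PartialSum e a n‖ := abs_mul_norm_le_of_basis hbasis a hin

lemma BoundedPartialSums.exists_abs_le (hc : 0 < c)
    (hbasis : ∀ (a : ℕ → ℝ) (m n : ℕ), m ≤ n → ‖PartialSum e a m‖ ≤ K * ‖PartialSum e a n‖)
    (hlow : ∀ n, c ≤ ‖e n‖) {a : ℕ → ℝ} (ha : BoundedPartialSums e a) :
    ∃ B, ∀ i, |a i| ≤ B := by
  obtain ⟨M, hM⟩ := ha
  refine ⟨|2 * K / c| * M, fun i => ?_⟩
  calc |a i| ≤ 2 * K / c * ‖PartialSum e a (i + 1)‖ :=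
        abs_le_of_basis hc hbasis hlow a i.lt_succ_self
    _ ≤ |2 * K / c| * ‖PartialSum e a (i + 1)‖ := by gcongr; exact le_abs_self _
    _ ≤ |2 * K / c| * M := by gcongr; exact hM _

lemma norm_partialSum_sub_le_of_basis {v : ℕ → X} (hK : 0 ≤ K) (hc : 0 < c)
    (hbasis : ∀ (a : ℕ → ℝ) (m n : ℕ), m ≤ n → ‖PartialSum e a m‖ ≤ K * ‖PartialSum e a n‖)
    (hlow : ∀ n, c ≤ ‖e n‖) (hsum : Summable fun n => ‖e n - v n‖) (a : ℕ → ℝ) (n : ℕ) :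
    ‖PartialSum e a n - PartialSum v a n‖ ≤
      2 * K / c * (∑' i, ‖e i - v i‖) * ‖PartialSum e a n‖ := by
  rw [partialSum_sub, mul_right_comm]
  exact norm_partialSum_le_of_abs_le (by positivity)
    (fun i hi => abs_le_of_basis hc hbasis hlow a hi) hsum

end Basis

section Perturbation

variable {e v : ℕ → X} {θ : ℝ}

lemma boundedPartialSums_iff_of_norm_partialSum_sub_le (hθ0 : 0 ≤ θ) (hθ1 : θ < 1)
    (hclose : ∀ a n, ‖PartialSum e a n - PartialSum v a n‖ ≤ θ * ‖PartialSum e a n‖)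
    (a : ℕ → ℝ) : BoundedPartialSums v a ↔ BoundedPartialSums e a := by
  constructor
  · rintro ⟨M, hM⟩
    refine ⟨M / (1 - θ), fun n => ?_⟩
    rw [le_div_iff₀ (by linarith), mul_comm]
    exact (one_sub_mul_norm_le_of_norm_sub_le (hclose a n)).trans (hM n)
  · rintro ⟨M, hM⟩
    exact ⟨(1 + θ) * M, fun n => (norm_le_one_add_mul_of_norm_sub_le (hclose a n)).trans
      (mul_le_mul_of_nonneg_left (hM n) (by linarith))⟩

lemma isBasicSeq_of_norm_partialSum_sub_le {K : ℝ} (hv : ∀ n, v n ≠ 0) (hK : 1 ≤ K)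
    (hbasis : ∀ (a : ℕ → ℝ) (m n : ℕ), m ≤ n → ‖PartialSum e a m‖ ≤ K * ‖PartialSum e a n‖)
    (hθ0 : 0 ≤ θ) (hθ1 : θ < 1)
    (hclose : ∀ a n, ‖PartialSum e a n - PartialSum v a n‖ ≤ θ * ‖PartialSum e a n‖) :
    IsBasicSeq v := by
  have h1θ : 0 < 1 - θ := by linarith
  refine ⟨hv, (1 + θ) * K / (1 - θ), ?_, fun a m n hmn => ?_⟩
  · rw [le_div_iff₀ h1θ]
    nlinarith
  · rw [div_mul_eq_mul_div, le_div_iff₀ h1θ]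
    calc ‖PartialSum v a m‖ * (1 - θ) ≤ (1 + θ) * ‖PartialSum e a m‖ * (1 - θ) := by
          gcongr
          exact norm_le_one_add_mul_of_norm_sub_le (hclose a m)
      _ ≤ (1 + θ) * (K * ‖PartialSum e a n‖) * (1 - θ) := by
          gcongr
          exact hbasis a m n hmn
      _ = (1 + θ) * K * ((1 - θ) * ‖PartialSum e a n‖) := by ring
      _ ≤ (1 + θ) * K * ‖PartialSum v a n‖ := by
          gcongr
          exact one_sub_mul_norm_le_of_norm_sub_le (hclose a n)

end Perturbation

theorem stmt13_general {X : Type*} [NormedAddCommGroup X] [NormedSpace ℝ X] [CompleteSpace X]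
    (e v : ℕ → X) (K c : ℝ) (hK : 1 ≤ K) (hc : 0 < c)
    (hbasis : ∀ (a : ℕ → ℝ) (m n : ℕ), m ≤ n →
      ‖PartialSum e a m‖ ≤ K * ‖PartialSum e a n‖)
    (hlow : ∀ n, c ≤ ‖e n‖)
    (hbc : BoundedlyComplete e)
    (hsum : Summable fun n => ‖e n - v n‖)
    (hsmall : (∑' n, ‖e n - v n‖) < c / (2 * K)) :
    IsBasicSeq v ∧ BoundedlyComplete v ∧ EquivSeq e v := by
  have hK0 : 0 < K := by linarith
  set θ := 2 * K / c * ∑' n, ‖e n - v n‖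
  have hθ0 : 0 ≤ θ := by positivity
  have hθ1 : θ < 1 :=
    (mul_lt_mul_of_pos_left hsmall (by positivity)).trans_eq (by field_simp)
  have hclose := norm_partialSum_sub_le_of_basis hK0.le hc hbasis hlow hsum
  have hbdd := boundedPartialSums_iff_of_norm_partialSum_sub_le hθ0 hθ1 hclose
  have hconv : ∀ a, BoundedPartialSums e a → (SeriesConverges e a ↔ SeriesConverges v a) := by
    intro a ha
    obtain ⟨B, hB⟩ := ha.exists_abs_le hc hbasis hlow
    exact seriesConverges_iff_of_seriesConverges_sub (seriesConverges_of_abs_le hB hsum)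
  have hv : ∀ n, v n ≠ 0 := fun n => by
    have hS : ‖e n - v n‖ < ‖e n‖ :=
      calc ‖e n - v n‖ ≤ ∑' i, ‖e i - v i‖ := hsum.le_tsum n fun i _ => norm_nonneg _
        _ < c / (2 * K) := hsmall
        _ ≤ c := div_le_self hc.le (by linarith)
        _ ≤ ‖e n‖ := hlow n
    rintro hvn
    simp [hvn] at hS
  refine ⟨isBasicSeq_of_norm_partialSum_sub_le hv hK hbasis hθ0 hθ1 hclose,
    fun a hv => ?_, fun a => ⟨fun he => ?_, fun hv => ?_⟩⟩
  · have he := (hbdd a).1 hv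
    exact (hconv a he).1 (hbc a he)
  · exact (hconv a he.boundedPartialSums).1 he
  · exact (hconv a ((hbdd a).1 hv.boundedPartialSums)).2 hv

/-- principle of small perturbations for bounded completeness:
if `{e n}` is a boundedly complete basic sequence with basis constant `K` and
`‖e n‖ ≥ c`, and `∑ ‖e n - v n‖ < c / (2 * K)`, then `{v n}` is a boundedly
complete basic sequence equivalent to `{e n}`. -/
theorem stmt13 {X : Type*} [NormedAddCommGroup X] [NormedSpace ℝ X] [CompleteSpace X]
    (e v : ℕ → X) (K c : ℝ) (hK : 1 ≤ K) (hc : 0 < c)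
    (hne : ∀ n, e n ≠ 0)
    (hbasis : ∀ (a : ℕ → ℝ) (m n : ℕ), m ≤ n →
      ‖PartialSum e a m‖ ≤ K * ‖PartialSum e a n‖)
    (hlow : ∀ n, c ≤ ‖e n‖)
    (hbc : BoundedlyComplete e)
    (hsum : Summable fun n => ‖e n - v n‖)
    (hsmall : (∑' n, ‖e n - v n‖) < c / (2 * K)) :
    IsBasicSeq v ∧ BoundedlyComplete v ∧ EquivSeq e v :=
  stmt13_general e v K c hK hc hbasis hlow hbc hsum hsmall

end
end

section
/- Let X be a Banach space with a boundedly complete basic sequence {e_n} that is also shrinking. Then the closed linear span [e_n] is reflexive. -/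
open Filter Finset NormedSpace

noncomputable section

variable {X : Type*} [NormedAddCommGroup X] [NormedSpace ℝ X]

/-!
Let `Y = [e_n]` and let `P_n : Y → Y` be the basis projections `y ↦ ∑_{i<n} e_i^*(y) e_i`, which
are bounded by the basis constant `K`. Shrinking gives `h ∘ P_n → h` in norm for every
`h ∈ Y*`. Given `F ∈ Y**`, the vectors `x_n = ∑_{i<n} F(e_i^*) e_i` satisfy `h(x_n) = F(h ∘ P_n)`,
so `‖x_n‖ ≤ K ‖F‖`; by bounded completeness they converge to some `x ∈ Y`, and then
`h(x) = lim F(h ∘ P_n) = F(h)` for every `h`, i.e. `F` is the image of `x` in `Y**`.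
-/

def HasBasisConstant (e : ℕ → X) (K : ℝ) : Prop :=
  ∀ (a : ℕ → ℝ) (m n : ℕ), m ≤ n → ‖PartialSum e a m‖ ≤ K * ‖PartialSum e a n‖

def coordProj (f : ℕ → StrongDual ℝ X) (e : ℕ → X) (n : ℕ) : X →L[ℝ] X :=
  ∑ i ∈ range n, (f i).smulRight (e i)

theorem coordProj_apply (f : ℕ → StrongDual ℝ X) (e : ℕ → X) (n : ℕ) (x : X) :
    coordProj f e n x = PartialSum e (fun i => f i x) n := by
  simp [coordProj, PartialSum]

theorem partialSum_succ_sub_partialSum (e : ℕ → X) (a : ℕ → ℝ) (n : ℕ) :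
    PartialSum e a (n + 1) - PartialSum e a n = a n • e n := by
  simp [PartialSum, sum_range_succ]

theorem partialSum_single (e : ℕ → X) (k n : ℕ) :
    PartialSum e (Finsupp.single k 1) n = if k < n then e k else 0 := by
  simp [PartialSum, Finsupp.single_apply]

section PartialSums

variable {e : ℕ → X} {K : ℝ}

theorem partialSum_eq_linearCombination {a : ℕ →₀ ℝ} {n : ℕ} (h : a.support ⊆ range n) :
    PartialSum e a n = Finsupp.linearCombination ℝ e a := by
  rw [Finsupp.linearCombination_apply,
    Finsupp.sum_of_support_subset a h (fun i c => c • e i) fun _ _ => zero_smul ℝ _]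
  rfl

theorem HasBasisConstant.norm_partialSum_le (hK : HasBasisConstant e K) (a : ℕ →₀ ℝ) (m : ℕ) :
    ‖PartialSum e a m‖ ≤ K * ‖Finsupp.linearCombination ℝ e a‖ := by
  obtain ⟨N, hN⟩ := a.support.exists_nat_subset_range
  have hsupp : a.support ⊆ range (max m N) := hN.trans (range_subset_range.2 (le_max_right m N))
  calc ‖PartialSum e a m‖ ≤ K * ‖PartialSum e a (max m N)‖ := hK a m _ (le_max_left m N)
    _ = K * ‖Finsupp.linearCombination ℝ e a‖ := by rw [partialSum_eq_linearCombination hsupp]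

theorem HasBasisConstant.norm_smul_le (hK : HasBasisConstant e K) (a : ℕ →₀ ℝ) (i : ℕ) :
    ‖a i • e i‖ ≤ 2 * K * ‖Finsupp.linearCombination ℝ e a‖ := by
  rw [← partialSum_succ_sub_partialSum]
  linarith [norm_sub_le (PartialSum e a (i + 1)) (PartialSum e a i),
    hK.norm_partialSum_le a (i + 1), hK.norm_partialSum_le a i]

theorem HasBasisConstant.linearIndependent (hne : ∀ n, e n ≠ 0) (hK : HasBasisConstant e K) :
    LinearIndependent ℝ e := by
  refine linearIndependent_iff.2 fun a ha => Finsupp.ext fun i => ?_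
  have h := hK.norm_smul_le a i
  rw [ha, norm_zero, mul_zero, norm_le_zero_iff, smul_eq_zero] at h
  exact h.resolve_right (hne i)

theorem HasBasisConstant.exists_coordinateFunctionals (hne : ∀ n, e n ≠ 0)
    (hK : HasBasisConstant e K) :
    ∃ f : ℕ → StrongDual ℝ X, ∀ a i, f i (Finsupp.linearCombination ℝ e a) = a i := by
  have hli := hK.linearIndependent hne
  have hbound : ∀ i (x : Submodule.span ℝ (Set.range e)),
      ‖hli.repr x i‖ ≤ 2 * K / ‖e i‖ * ‖x‖ := by
    intro i x
    have h := hK.norm_smul_le (hli.repr x) i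
    rw [hli.linearCombination_repr, norm_smul] at h
    rw [div_mul_eq_mul_div, le_div_iff₀ (norm_pos_iff.2 (hne i))]
    exact h
  let c i := ((Finsupp.lapply i).comp hli.repr).mkContinuous _ (hbound i)
  choose f hf _ using fun i => exists_extension_norm_eq _ (c i)
  refine ⟨f, fun a i => ?_⟩
  have hmem : Finsupp.linearCombination ℝ e a ∈ Submodule.span ℝ (Set.range e) := by
    rw [← Finsupp.range_linearCombination]
    exact LinearMap.mem_range_self _ a
  rw [hf i ⟨_, hmem⟩]
  change hli.repr ⟨_, hmem⟩ i = a i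
  rw [hli.repr_eq rfl]

end PartialSums

section CoordProj

variable {e : ℕ → X} {f : ℕ → StrongDual ℝ X} {K : ℝ}

theorem apply_partialSum_eq_bidual_apply (F : StrongDual ℝ (StrongDual ℝ X))
    (h : StrongDual ℝ X) (n : ℕ) :
    h (PartialSum e (fun i => F (f i)) n) = F (h.comp (coordProj f e n)) := by
  have hcomp : h.comp (coordProj f e n) = ∑ i ∈ range n, h (e i) • f i := by
    ext x
    simp [coordProj_apply, PartialSum, mul_comm]
  simp [hcomp, PartialSum, mul_comm]

theorem banachReflexive_of_coordProj (hbc : BoundedlyComplete e)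
    (hP : ∀ n, ‖coordProj f e n‖ ≤ K)
    (hsh : ∀ h : StrongDual ℝ X, Tendsto (fun n => h.comp (coordProj f e n)) atTop (nhds h)) :
    BanachReflexive X := by
  intro F
  have hbdd : ∀ n, ‖PartialSum e (fun i => F (f i)) n‖ ≤ ‖F‖ * K := fun n =>
    norm_le_dual_bound ℝ _ (mul_nonneg (norm_nonneg F) ((norm_nonneg _).trans (hP 0))) fun h => by
      rw [apply_partialSum_eq_bidual_apply]
      calc ‖F (h.comp (coordProj f e n))‖ ≤ ‖F‖ * (‖h‖ * ‖coordProj f e n‖) :=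
            F.le_opNorm_of_le (h.opNorm_comp_le _)
        _ ≤ ‖F‖ * K * ‖h‖ := by
            rw [mul_assoc, mul_comm K]
            gcongr
            exact hP n
  obtain ⟨x, hx⟩ := hbc _ ⟨_, hbdd⟩
  refine ⟨x, ContinuousLinearMap.ext fun h =>
    tendsto_nhds_unique ((h.continuous.tendsto x).comp hx) ?_⟩
  simpa only [Function.comp_def, apply_partialSum_eq_bidual_apply] using
    (F.continuous.tendsto h).comp (hsh h)

end CoordProj

section ClosedSpan

variable {e : ℕ → X} {f : ℕ → StrongDual ℝ X} {K : ℝ}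

theorem mem_closedSpan (e : ℕ → X) (i : ℕ) : e i ∈ closedSpan e :=
  Submodule.le_topologicalClosure _ (Submodule.subset_span ⟨i, rfl⟩)

def toClosedSpan (e : ℕ → X) (i : ℕ) : closedSpan e :=
  ⟨e i, mem_closedSpan e i⟩

def restrictCoord (e : ℕ → X) (f : ℕ → StrongDual ℝ X) (i : ℕ) :
    StrongDual ℝ (closedSpan e) :=
  (f i).comp (closedSpan e).subtypeL

theorem coe_partialSum_toClosedSpan (a : ℕ → ℝ) (n : ℕ) :
    ((PartialSum (toClosedSpan e) a n : closedSpan e) : X) = PartialSum e a n := by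
  simp [PartialSum, toClosedSpan]

theorem coe_coordProj_restrictCoord (n : ℕ) (y : closedSpan e) :
    (coordProj (restrictCoord e f) (toClosedSpan e) n y : X) = coordProj f e n y := by
  simp [coordProj_apply, coe_partialSum_toClosedSpan, restrictCoord]

theorem BoundedlyComplete.toClosedSpan (hbc : BoundedlyComplete e) :
    BoundedlyComplete (toClosedSpan e) := by
  rintro a ⟨M, hM⟩
  obtain ⟨x, hx⟩ := hbc a ⟨M, fun n => by
    rw [← coe_partialSum_toClosedSpan, Submodule.norm_coe]
    exact hM n⟩
  have hmem : ∀ n, PartialSum e a n ∈ closedSpan e := fun n =>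
    coe_partialSum_toClosedSpan (e := e) a n ▸ Subtype.prop _
  have hxY : x ∈ closedSpan e :=
    (Submodule.isClosed_topologicalClosure _).mem_of_tendsto hx (Eventually.of_forall hmem)
  refine ⟨⟨x, hxY⟩, ?_⟩
  rw [Topology.IsInducing.subtypeVal.tendsto_nhds_iff]
  simpa [Function.comp_def, coe_partialSum_toClosedSpan] using hx

theorem HasBasisConstant.norm_coordProj_apply_le (hK : HasBasisConstant e K)
    (hf : ∀ a i, f i (Finsupp.linearCombination ℝ e a) = a i) (n : ℕ) {x : X}
    (hx : x ∈ closedSpan e) :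
    ‖coordProj f e n x‖ ≤ K * ‖x‖ := by
  have hclosed : IsClosed {x | ‖coordProj f e n x‖ ≤ K * ‖x‖} :=
    isClosed_le (coordProj f e n).continuous.norm (continuous_const.mul continuous_norm)
  refine closure_minimal (fun x hx => ?_) hclosed hx
  rw [SetLike.mem_coe, ← Finsupp.range_linearCombination] at hx
  obtain ⟨a, rfl⟩ := hx
  simpa [coordProj_apply, hf] using hK.norm_partialSum_le a n

theorem HasBasisConstant.norm_coordProj_restrictCoord_le (hK : HasBasisConstant e K)
    (hK0 : 0 ≤ K) (hf : ∀ a i, f i (Finsupp.linearCombination ℝ e a) = a i) (n : ℕ) :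
    ‖coordProj (restrictCoord e f) (toClosedSpan e) n‖ ≤ K :=
  ContinuousLinearMap.opNorm_le_bound _ hK0 fun y => by
    rw [← Submodule.norm_coe, coe_coordProj_restrictCoord]
    exact hK.norm_coordProj_apply_le hf n y.2

theorem sub_coordProj_mem_tailSpan (hf : ∀ a i, f i (Finsupp.linearCombination ℝ e a) = a i)
    (n : ℕ) {x : X} (hx : x ∈ closedSpan e) :
    x - coordProj f e n x ∈ tailSpan e n := by
  let R := ContinuousLinearMap.id ℝ X - coordProj f e n
  suffices closedSpan e ≤ (tailSpan e n).comap (R : X →ₗ[ℝ] X) from this hx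
  refine Submodule.topologicalClosure_minimal _ (Submodule.span_le.2 ?_)
    ((Submodule.isClosed_topologicalClosure _).preimage R.continuous)
  rintro _ ⟨k, rfl⟩
  have hfe : (fun i => f i (e k)) = Finsupp.single k 1 := by
    ext i
    simpa using hf (Finsupp.single k 1) i
  change e k - coordProj f e n (e k) ∈ tailSpan e n
  rw [coordProj_apply, hfe, partialSum_single]
  split_ifs with hk
  · rw [sub_self]
    exact zero_mem _
  · rw [sub_zero]
    exact Submodule.le_topologicalClosure _ (Submodule.subset_span ⟨k, not_lt.1 hk, rfl⟩)

theorem Shrinking.abs_apply_le (hsh : Shrinking e) (h : StrongDual ℝ X) {ε : ℝ} (hε : 0 < ε) :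
    ∃ N, ∀ n ≥ N, ∀ x ∈ tailSpan e n, |h x| ≤ ε * ‖x‖ := by
  obtain ⟨N, hN⟩ := hsh h ε hε
  refine ⟨N, fun n hn x hx => ?_⟩
  have hnorm : ‖h.comp (tailSpan e n).subtypeL‖ ≤ ε :=
    ContinuousLinearMap.opNorm_le_of_unit_norm hε.le fun y hy => hN n hn y y.2 hy.le
  simpa using (h.comp (tailSpan e n).subtypeL).le_of_opNorm_le hnorm ⟨x, hx⟩

theorem Shrinking.tendsto_comp_coordProj (hsh : Shrinking e) (hK : HasBasisConstant e K)
    (hK0 : 0 ≤ K) (hf : ∀ a i, f i (Finsupp.linearCombination ℝ e a) = a i)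
    (h : StrongDual ℝ (closedSpan e)) :
    Tendsto (fun n => h.comp (coordProj (restrictCoord e f) (toClosedSpan e) n)) atTop
      (nhds h) := by
  obtain ⟨ht, hht, -⟩ := exists_extension_norm_eq _ h
  refine Metric.tendsto_atTop.2 fun ε hε => ?_
  set δ := ε / (2 * (K + 1))
  obtain ⟨N, hN⟩ := hsh.abs_apply_le ht (ε := δ) (by positivity)
  refine ⟨N, fun n hn => (dist_eq_norm _ _).trans_lt (lt_of_le_of_lt ?_ (half_lt_self hε))⟩
  refine ContinuousLinearMap.opNorm_le_bound _ (by positivity) fun y => ?_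
  have htail := Submodule.neg_mem _ (sub_coordProj_mem_tailSpan hf n y.2)
  rw [neg_sub] at htail
  have hPy := hK.norm_coordProj_apply_le hf n y.2
  calc ‖(h.comp (coordProj (restrictCoord e f) (toClosedSpan e) n) - h) y‖
        = |ht (coordProj f e n y - y)| := by
          simp [← hht, coe_coordProj_restrictCoord, Real.norm_eq_abs]
    _ ≤ δ * ‖coordProj f e n y - y‖ := hN n hn _ htail
    _ ≤ δ * ((K + 1) * ‖y‖) := by
          gcongr
          have := norm_sub_le (coordProj f e n y) y
          rw [Submodule.norm_coe] at this hPy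
          linarith
    _ = ε / 2 * ‖y‖ := by
          simp only [δ]
          field_simp

end ClosedSpan

theorem stmt15_general {X : Type*} [NormedAddCommGroup X] [NormedSpace ℝ X]
    (e : ℕ → X) (hb : IsBasicSeq e) (hbc : BoundedlyComplete e)
    (hsh : Shrinking e) :
    BanachReflexive ↥(closedSpan e) := by
  obtain ⟨hne, K, hK1, hK⟩ := hb
  have hK : HasBasisConstant e K := hK
  have hK0 : (0 : ℝ) ≤ K := zero_le_one.trans hK1
  obtain ⟨f, hf⟩ := hK.exists_coordinateFunctionals hne
  exact banachReflexive_of_coordProj hbc.toClosedSpan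
    (hK.norm_coordProj_restrictCoord_le hK0 hf) (hsh.tendsto_comp_coordProj hK hK0 hf)

/-- a shrinking and boundedly complete basic sequence spans a
reflexive subspace (James' criterion). -/
theorem stmt15 {X : Type*} [NormedAddCommGroup X] [NormedSpace ℝ X] [CompleteSpace X]
    (e : ℕ → X) (hb : IsBasicSeq e) (hbc : BoundedlyComplete e)
    (hsh : Shrinking e) :
    BanachReflexive ↥(closedSpan e) :=
  stmt15_general e hb hbc hsh
end
end
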